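/- The C-bracket of any two quasi-trivial parameters on ℝ^(2D) vanishes identically: if δ₁ and δ₂ are quasi-trivial then [δ₁, δ₂]_C^M = 0 at every point and for every index M. -/

import Mathlib

open scoped BigOperators

/-- Index set of the doubled space ℝ^(2D). -/
abbrev DoubledIdx (D : ℕ) := Fin D ⊕ Fin D

/-- The doubled space ℝ^(2D). -/
abbrev DoubledSpace (D : ℕ) := DoubledIdx D → ℝ

/-- Partial derivative ∂_N f at x. -/
noncomputable def pd {D : ℕ} (f : DoubledSpace D → ℝ) (N : DoubledIdx D)
    (x : DoubledSpace D) : ℝ :=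
  fderiv ℝ f x (Pi.single N 1)

/-- The constant O(D,D) metric η. -/
def eta (D : ℕ) : DoubledIdx D → DoubledIdx D → ℝ
  | Sum.inl i, Sum.inr j => if i = j then 1 else 0
  | Sum.inr i, Sum.inl j => if i = j then 1 else 0
  | _, _ => 0

/-- Raised-index partial derivative ∂^M f := Σ_N η^{MN} ∂_N f. -/
noncomputable def pdUp {D : ℕ} (f : DoubledSpace D → ℝ) (M : DoubledIdx D)
    (x : DoubledSpace D) : ℝ :=
  ∑ N, eta D M N * pd f N x

/-- A constrained function: smooth and depending only on the first (inl) block. -/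
def IsConstrained {D : ℕ} (f : DoubledSpace D → ℝ) : Prop :=
  ContDiff ℝ (⊤ : ℕ∞) f ∧
    ∀ x y : DoubledSpace D, (∀ i, x (Sum.inl i) = y (Sum.inl i)) → f x = f y

/-- A parameter (generalized vector field) on the doubled space, components ξ^M. -/
abbrev Param (D : ℕ) := DoubledIdx D → DoubledSpace D → ℝ

/-- A constrained parameter: all components constrained. -/
def IsConstrainedParam {D : ℕ} (ξ : Param D) : Prop := ∀ M, IsConstrained (ξ M)

/-- A quasi-trivial parameter: δ^M = Σ_i ρ_i ∂^M σ_i. -/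
def IsQuasiTrivial {D : ℕ} (δ : Param D) : Prop :=
  ∃ (r : ℕ) (ρ σ : Fin r → (DoubledSpace D → ℝ)),
    (∀ i, IsConstrained (ρ i)) ∧ (∀ i, IsConstrained (σ i)) ∧
    ∀ M x, δ M x = ∑ i, ρ i x * pdUp (σ i) M x

/-- ∂^M ξ_P := Σ_{Q,R} η^{MQ} η_{PR} ∂_Q ξ^R. -/
noncomputable def pdUpLow {D : ℕ} (ξ : Param D) (M P : DoubledIdx D)
    (x : DoubledSpace D) : ℝ :=
  ∑ Q, ∑ R, eta D M Q * eta D P R * pd (ξ R) Q x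

/-- Generalized Lie derivative (L̂_ξ V)_M. -/
noncomputable def glie {D : ℕ} (ξ V : Param D) : Param D :=
  fun M x => (∑ P, ξ P x * pd (V M) P x)
    + ∑ K, (pd (ξ K) M x - pdUpLow ξ K M x) * V K x

/-- η-transpose of a matrix: t(X)_M{}^N := Σ_{P,Q} η_{MP} η^{NQ} X_Q{}^P. -/
def etaT {D : ℕ} (X : Matrix (DoubledIdx D) (DoubledIdx D) ℝ) :
    Matrix (DoubledIdx D) (DoubledIdx D) ℝ :=
  Matrix.of fun M N => ∑ P, ∑ Q, eta D M P * eta D N Q * X Q P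

/-- The C-bracket of two parameters. -/
noncomputable def cbracket {D : ℕ} (ξ₁ ξ₂ : Param D) : Param D :=
  fun M x => (∑ P, ξ₁ P x * pd (ξ₂ M) P x) - (∑ P, ξ₂ P x * pd (ξ₁ M) P x)
    - (1/2) * ∑ P, (ξ₁ P x * pdUpLow ξ₂ M P x - ξ₂ P x * pdUpLow ξ₁ M P x)

/-- Directional derivative (ξ·∂)f. -/
noncomputable def xid {D : ℕ} (ξ : Param D) (f : DoubledSpace D → ℝ)
    (x : DoubledSpace D) : ℝ :=
  ∑ P, ξ P x * pd f P x

/-- Iterated directional derivative (ξ·∂)^n f. -/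
noncomputable def xidIter {D : ℕ} (ξ : Param D) : ℕ → (DoubledSpace D → ℝ) →
    DoubledSpace D → ℝ
  | 0, f => f
  | n+1, f => xid ξ (xidIter ξ n f)

-- AUX START
noncomputable def projL (D : ℕ) : DoubledSpace D →L[ℝ] DoubledSpace D :=
  ContinuousLinearMap.pi (fun N =>
    Sum.elim (fun i => ContinuousLinearMap.proj (Sum.inl i)) (fun _ => 0) N)

lemma projL_inl {D : ℕ} (x : DoubledSpace D) (i : Fin D) :
    projL D x (Sum.inl i) = x (Sum.inl i) := rfl

lemma projL_inr {D : ℕ} (x : DoubledSpace D) (i : Fin D) :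
    projL D x (Sum.inr i) = 0 := rfl

lemma projL_eq {D : ℕ} {x y : DoubledSpace D}
    (h : ∀ i, x (Sum.inl i) = y (Sum.inl i)) : projL D x = projL D y := by
  funext N
  cases N with
  | inl i => simpa [projL_inl] using h i
  | inr i => simp [projL_inr]

lemma pd_eq_proj {D : ℕ} {f : DoubledSpace D → ℝ} (hf : IsConstrained f)
    (N : DoubledIdx D) (x : DoubledSpace D) :
    pd f N x = fderiv ℝ f (projL D x) (projL D (Pi.single N 1)) := by
  have hfc : f ∘ (projL D) = f := by
    funext z
    exact hf.2 _ _ (fun i => rfl)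
  have hdiff : DifferentiableAt ℝ f (projL D x) :=
    (hf.1.differentiable (by simp)) _
  have hkey : fderiv ℝ f x = (fderiv ℝ f (projL D x)).comp (projL D) := by
    conv_lhs => rw [← hfc]
    rw [fderiv_comp x hdiff (projL D).differentiableAt, (projL D).fderiv]
  rw [pd, hkey]; rfl

lemma pd_inr_eq_zero {D : ℕ} {f : DoubledSpace D → ℝ} (hf : IsConstrained f)
    (i : Fin D) (x : DoubledSpace D) : pd f (Sum.inr i) x = 0 := by
  rw [pd_eq_proj hf]
  have : projL D (Pi.single (Sum.inr i) (1:ℝ)) = 0 := by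
    funext N
    cases N with
    | inl j => simp [projL_inl, Pi.single_apply]
    | inr j => simp [projL_inr]
  rw [this, map_zero]

lemma pd_constrained {D : ℕ} {f : DoubledSpace D → ℝ} (hf : IsConstrained f)
    (N : DoubledIdx D) : IsConstrained (pd f N) := by
  constructor
  · exact (hf.1.fderiv_right (by simp)).clm_apply contDiff_const
  · intro x y h
    rw [pd_eq_proj hf, pd_eq_proj hf, projL_eq h]

lemma pd_zero_fun {D : ℕ} (Q : DoubledIdx D) (x : DoubledSpace D) :
    pd (fun _ => (0:ℝ)) Q x = 0 := by
  simp [pd]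

lemma pdUp_inl {D : ℕ} (f : DoubledSpace D → ℝ) (i : Fin D) (x : DoubledSpace D) :
    pdUp f (Sum.inl i) x = pd f (Sum.inr i) x := by
  rw [pdUp, Fintype.sum_sum_type]
  simp [eta, ite_mul]

lemma pdUp_inr {D : ℕ} (f : DoubledSpace D → ℝ) (i : Fin D) (x : DoubledSpace D) :
    pdUp f (Sum.inr i) x = pd f (Sum.inl i) x := by
  rw [pdUp, Fintype.sum_sum_type]
  simp [eta, ite_mul]

lemma qt_inl {D : ℕ} {δ : Param D} (h : IsQuasiTrivial δ) (i : Fin D) :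
    δ (Sum.inl i) = fun _ => 0 := by
  obtain ⟨r, ρ, σ, hρ, hσ, hδ⟩ := h
  funext x
  rw [hδ]
  refine Finset.sum_eq_zero fun j _ => ?_
  rw [pdUp_inl, pd_inr_eq_zero (hσ j), mul_zero]

lemma qt_constrained {D : ℕ} {δ : Param D} (h : IsQuasiTrivial δ)
    (M : DoubledIdx D) : IsConstrained (δ M) := by
  cases M with
  | inl i =>
    rw [qt_inl h i]
    exact ⟨contDiff_const, fun _ _ _ => rfl⟩
  | inr i =>
    obtain ⟨r, ρ, σ, hρ, hσ, hδ⟩ := h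
    have hfun : δ (Sum.inr i) = fun x => ∑ j, ρ j x * pd (σ j) (Sum.inl i) x := by
      funext x
      rw [hδ]
      exact Finset.sum_congr rfl fun j _ => by rw [pdUp_inr]
    rw [hfun]
    constructor
    · exact ContDiff.sum fun j _ => (hρ j).1.mul (pd_constrained (hσ j) _).1
    · intro x y hxy
      refine Finset.sum_congr rfl fun j _ => ?_
      rw [(hρ j).2 x y hxy, (pd_constrained (hσ j) _).2 x y hxy]

lemma pdUpLow_qt {D : ℕ} {δ : Param D} (h : IsQuasiTrivial δ)
    (M : DoubledIdx D) (p : Fin D) (x : DoubledSpace D) :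
    pdUpLow δ M (Sum.inr p) x = 0 := by
  rw [pdUpLow]
  refine Finset.sum_eq_zero fun Q _ => Finset.sum_eq_zero fun R _ => ?_
  cases R with
  | inl j =>
    rw [qt_inl h j, pd_zero_fun, mul_zero]
  | inr j =>
    simp [eta]


/-- The C-bracket of any two quasi-trivial parameters vanishes identically. -/
theorem stmt_6 {D : ℕ} (δ₁ δ₂ : Param D)
    (h₁ : IsQuasiTrivial δ₁) (h₂ : IsQuasiTrivial δ₂) :
    ∀ (M : DoubledIdx D) (x : DoubledSpace D), cbracket δ₁ δ₂ M x = 0 := by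
  intro M x
  have hz : ∀ (δ δ' : Param D), IsQuasiTrivial δ → IsQuasiTrivial δ' →
      ∑ P, δ P x * pd (δ' M) P x = 0 := by
    intro δ δ' h h'
    refine Finset.sum_eq_zero fun P _ => ?_
    cases P with
    | inl i => rw [qt_inl h i]; simp
    | inr i => rw [pd_inr_eq_zero (qt_constrained h' M) i, mul_zero]
  have h3 : ∑ P, (δ₁ P x * pdUpLow δ₂ M P x - δ₂ P x * pdUpLow δ₁ M P x) = 0 := by
    refine Finset.sum_eq_zero fun P _ => ?_
    cases P with
    | inl i => rw [qt_inl h₁ i, qt_inl h₂ i]; simp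
    | inr i => rw [pdUpLow_qt h₂ M i x, pdUpLow_qt h₁ M i x]; ring
  rw [cbracket, hz δ₁ δ₂ h₁ h₂, hz δ₂ δ₁ h₂ h₁, h3]
  ring
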